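/- Let X be a separable Banach space. Then X admits a Markushevich basis: there exists a biorthogonal system (x_n, x*_n)_{n∈ℕ} in X × X* (i.e., ⟨x*_m, x_n⟩ = δ_{mn}) such that the closed linear span of (x_n) is X and ∩_n ker(x*_n) = {0}. -/

import Mathlib

/-!
Gram–Schmidt back and forth. Fix a dense sequence `(yₖ)` in `X` and a sequence `(gₖ)` in `X*`
separating the points of `X` (norming functionals of the `yₖ`). A finite biorthogonal system
`(xᵢ, fᵢ)_{i<n}` splits `X` as `span {xᵢ} ⊕ ⋂ ker fᵢ` via `z ↦ ∑ fᵢ(z) xᵢ`, so it can be extended by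
one pair so that a prescribed `y` enters the span of the `xᵢ` (add `y - ∑ fᵢ(y) xᵢ` and a
Hahn–Banach functional), or a prescribed `g` enters the span of the `fᵢ` (add `g - ∑ g(xᵢ) fᵢ`
and a vector of `⋂ ker fᵢ` on which it does not vanish). When there is nothing to add, infinite
dimensionality still provides some new pair. Alternating the two steps captures every `yₖ`,
which makes the `xₙ` fundamental, and every `gₖ`, which makes the `fₙ` total.
-/

open Set Submodule TopologicalSpace

theorem Fin.exists_seq_of_forall_exists_snoc {α : Type*} (P : ∀ n, (Fin n → α) → Prop)
    (h0 : P 0 Fin.elim0) (hstep : ∀ n s, P n s → ∃ a, P (n + 1) (Fin.snoc s a)) :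
    ∃ F : ℕ → α, ∀ n, P n fun i => F i := by
  let S : ∀ n, {s : Fin n → α // P n s} := fun n => Nat.rec ⟨_, h0⟩
    (fun n s => ⟨Fin.snoc s.1 (hstep n s.1 s.2).choose, (hstep n s.1 s.2).choose_spec⟩) n
  have hS : ∀ n (i : Fin n), (S n).1 i = (S (i + 1)).1 (Fin.last i) := by
    intro n
    induction n with
    | zero => exact fun i => i.elim0
    | succ n ih =>
      intro i
      induction i using Fin.lastCases with
      | last => rfl
      | cast i => simpa [S] using ih i
  refine ⟨fun k => (S (k + 1)).1 (Fin.last k), fun n => ?_⟩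
  simpa only [← hS] using (S n).2

theorem Submodule.span_range_le_span_range_snoc {R M : Type*} [Semiring R] [AddCommMonoid M]
    [Module R M] {n : ℕ} (x : Fin n → M) (v : M) :
    span R (range x) ≤ span R (range (Fin.snoc x v)) :=
  span_mono (by simp [subset_insert])

theorem Submodule.add_mem_span_range_snoc {R M : Type*} [Semiring R] [AddCommMonoid M]
    [Module R M] {n : ℕ} {x : Fin n → M} {y : M} (hy : y ∈ span R (range x)) (v : M) :
    v + y ∈ span R (range (Fin.snoc x v)) := by
  rw [Fin.range_snoc, span_insert]
  exact add_mem_sup (mem_span_singleton_self v) hy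

section Biorthogonal

variable {𝕜 X : Type*} [RCLike 𝕜] [NormedAddCommGroup X] [NormedSpace 𝕜 X]

theorem Submodule.exists_dual_eq_one_of_notMem (W : Submodule 𝕜 X) (hW : IsClosed (W : Set X))
    {v : X} (hv : v ∉ W) : ∃ φ : StrongDual 𝕜 X, φ v = 1 ∧ ∀ w ∈ W, φ w = 0 := by
  obtain ⟨ψ, hψ⟩ := SeparatingDual.exists_eq_one (R := 𝕜) (x := W.mkQ v) (by simpa using hv)
  exact ⟨ψ.comp W.mkQL, hψ, fun w hw => by simp [(Quotient.mk_eq_zero W).2 hw]⟩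

variable (𝕜) in
def IsBiorthogonal {ι : Type*} [DecidableEq ι] (x : ι → X) (f : ι → StrongDual 𝕜 X) : Prop :=
  ∀ i j, f i (x j) = if i = j then 1 else 0

namespace IsBiorthogonal

section Fintype

variable {ι : Type*} [DecidableEq ι] [Fintype ι] {x : ι → X} {f : ι → StrongDual 𝕜 X}

theorem apply_sub_sum (h : IsBiorthogonal 𝕜 x f) (z : X) (i : ι) :
    f i (z - ∑ j, f j z • x j) = 0 := by
  simp [h i, mul_ite]

theorem sub_sum_apply (h : IsBiorthogonal 𝕜 x f) (g : StrongDual 𝕜 X) (j : ι) :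
    (g - ∑ i, g (x i) • f i) (x j) = 0 := by
  simp [h _ j, mul_ite]

theorem exists_notMem_span (hX : ¬FiniteDimensional 𝕜 X) (h : IsBiorthogonal 𝕜 x f) :
    ∃ v, (∀ i, f i v = 0) ∧ v ∉ span 𝕜 (range x) := by
  by_contra! hc
  have hW : span 𝕜 (range x) = ⊤ := eq_top_iff'.2 fun z => by
    simpa using add_mem (hc _ (h.apply_sub_sum z))
      ((mem_span_range_iff_exists_fun 𝕜).2 ⟨fun j => f j z, rfl⟩)
  exact hX (Module.finite_def.2 (hW ▸ fg_span (finite_range x)))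

end Fintype

section snoc

variable {n : ℕ} {x : Fin n → X} {f : Fin n → StrongDual 𝕜 X}

theorem snoc (h : IsBiorthogonal 𝕜 x f) {v : X} {φ : StrongDual 𝕜 X} (hv : ∀ i, f i v = 0)
    (hφ : ∀ i, φ (x i) = 0) (hφv : φ v = 1) :
    IsBiorthogonal 𝕜 (Fin.snoc x v) (Fin.snoc f φ) := by
  intro i j
  induction i using Fin.lastCases <;> induction j using Fin.lastCases <;>
    simp [h _ _, hv, hφ, hφv, Fin.castSucc_ne_last, (Fin.castSucc_ne_last _).symm]

theorem exists_snoc_of_notMem_span (h : IsBiorthogonal 𝕜 x f) {v : X} (hv : ∀ i, f i v = 0)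
    (hvx : v ∉ span 𝕜 (range x)) : ∃ φ, IsBiorthogonal 𝕜 (Fin.snoc x v) (Fin.snoc f φ) := by
  have := FiniteDimensional.span_of_finite 𝕜 (finite_range x)
  obtain ⟨φ, hφv, hφ⟩ := (span 𝕜 (range x)).exists_dual_eq_one_of_notMem
    (span 𝕜 (range x)).closed_of_finiteDimensional hvx
  exact ⟨φ, h.snoc hv (fun i => hφ _ (subset_span (mem_range_self i))) hφv⟩

theorem exists_snoc (hX : ¬FiniteDimensional 𝕜 X) (h : IsBiorthogonal 𝕜 x f) :
    ∃ v φ, IsBiorthogonal 𝕜 (Fin.snoc x v) (Fin.snoc f φ) :=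
  have ⟨v, hv, hvx⟩ := h.exists_notMem_span hX
  ⟨v, h.exists_snoc_of_notMem_span hv hvx⟩

theorem exists_snoc_mem_span (hX : ¬FiniteDimensional 𝕜 X)
    (h : IsBiorthogonal 𝕜 x f) (y : X) :
    ∃ v φ, IsBiorthogonal 𝕜 (Fin.snoc x v) (Fin.snoc f φ) ∧
      y ∈ span 𝕜 (range (Fin.snoc x v)) := by
  have hPy : ∑ j, f j y • x j ∈ span 𝕜 (range x) :=
    (mem_span_range_iff_exists_fun 𝕜).2 ⟨_, rfl⟩
  by_cases hv : y - ∑ j, f j y • x j ∈ span 𝕜 (range x)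
  · obtain ⟨v, φ, hφ⟩ := h.exists_snoc hX
    refine ⟨v, φ, hφ, span_range_le_span_range_snoc x v ?_⟩
    simpa using add_mem hv hPy
  · obtain ⟨φ, hφ⟩ := h.exists_snoc_of_notMem_span (h.apply_sub_sum y) hv
    exact ⟨_, φ, hφ, by simpa using add_mem_span_range_snoc hPy (y - ∑ j, f j y • x j)⟩

theorem exists_snoc_dual_mem_span (hX : ¬FiniteDimensional 𝕜 X)
    (h : IsBiorthogonal 𝕜 x f) (g : StrongDual 𝕜 X) :
    ∃ v φ, IsBiorthogonal 𝕜 (Fin.snoc x v) (Fin.snoc f φ) ∧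
      g ∈ span 𝕜 (range (Fin.snoc f φ)) := by
  set ψ := g - ∑ i, g (x i) • f i
  have hPg : ∑ i, g (x i) • f i ∈ span 𝕜 (range f) :=
    (mem_span_range_iff_exists_fun 𝕜).2 ⟨_, rfl⟩
  have hψx : ∀ j, ψ (x j) = 0 := h.sub_sum_apply g
  by_cases hψ : ∃ v, (∀ i, f i v = 0) ∧ ψ v ≠ 0
  · obtain ⟨v, hv, hψv⟩ := hψ
    refine ⟨(ψ v)⁻¹ • v, ψ, h.snoc (by simp [hv]) hψx (by simp [hψv]), ?_⟩
    simpa [ψ] using add_mem_span_range_snoc hPg ψ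
  · push Not at hψ
    have hψ0 : ψ = 0 := by
      ext z
      calc ψ z = ψ (z - ∑ j, f j z • x j) + ∑ j, f j z • ψ (x j) := by simp [map_sum]
        _ = 0 := by simp [hψ _ (h.apply_sub_sum z), hψx]
    obtain ⟨v, φ, hφ⟩ := h.exists_snoc hX
    refine ⟨v, φ, hφ, span_range_le_span_range_snoc f φ ?_⟩
    rwa [← sub_eq_zero.1 hψ0] at hPg

end snoc

end IsBiorthogonal

def IsMarkushevichStage (y : ℕ → X) (g : ℕ → StrongDual 𝕜 X) (n : ℕ) (x : Fin n → X)
    (f : Fin n → StrongDual 𝕜 X) : Prop :=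
  IsBiorthogonal 𝕜 x f ∧ (∀ k, 2 * k < n → y k ∈ span 𝕜 (range x)) ∧
    ∀ k, 2 * k + 1 < n → g k ∈ span 𝕜 (range f)

theorem IsMarkushevichStage.exists_snoc (hX : ¬FiniteDimensional 𝕜 X) {y : ℕ → X}
    {g : ℕ → StrongDual 𝕜 X} {n : ℕ} {x : Fin n → X} {f : Fin n → StrongDual 𝕜 X}
    (h : IsMarkushevichStage y g n x f) :
    ∃ v φ, IsMarkushevichStage y g (n + 1) (Fin.snoc x v) (Fin.snoc f φ) := by
  obtain ⟨hxf, hy, hg⟩ := h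
  obtain ⟨m, rfl | rfl⟩ := Nat.even_or_odd' n
  · obtain ⟨v, φ, hxf', hym⟩ := hxf.exists_snoc_mem_span hX (y m)
    refine ⟨v, φ, hxf', fun k hk => ?_, fun k hk =>
      span_range_le_span_range_snoc f φ (hg k (by omega))⟩
    obtain hk | rfl : 2 * k < 2 * m ∨ k = m := by omega
    · exact span_range_le_span_range_snoc x v (hy k hk)
    · exact hym
  · obtain ⟨v, φ, hxf', hgm⟩ := hxf.exists_snoc_dual_mem_span hX (g m)
    refine ⟨v, φ, hxf', fun k hk =>
      span_range_le_span_range_snoc x v (hy k (by omega)), fun k hk => ?_⟩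
    obtain hk | rfl : 2 * k + 1 < 2 * m + 1 ∨ k = m := by omega
    · exact span_range_le_span_range_snoc f φ (hg k hk)
    · exact hgm

theorem exists_isBiorthogonal_forall_mem_span (hX : ¬FiniteDimensional 𝕜 X) (y : ℕ → X)
    (g : ℕ → StrongDual 𝕜 X) :
    ∃ (x : ℕ → X) (f : ℕ → StrongDual 𝕜 X), IsBiorthogonal 𝕜 x f ∧
      (∀ k, y k ∈ span 𝕜 (range x)) ∧ ∀ k, g k ∈ span 𝕜 (range f) := by
  obtain ⟨F, hF⟩ := Fin.exists_seq_of_forall_exists_snoc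
    (fun n s => IsMarkushevichStage y g n (Prod.fst ∘ s) (Prod.snd ∘ s))
    ⟨fun i => i.elim0, by simp, by simp⟩ fun n s hs => by
      obtain ⟨v, φ, h⟩ := hs.exists_snoc hX
      exact ⟨(v, φ), by simpa only [Fin.comp_snoc] using h⟩
  have hx : ∀ n, span 𝕜 (range fun i : Fin n => (F i).1) ≤ span 𝕜 (range fun k => (F k).1) :=
    fun n => span_mono (range_subset_iff.2 fun i => mem_range_self _)
  have hf : ∀ n, span 𝕜 (range fun i : Fin n => (F i).2) ≤ span 𝕜 (range fun k => (F k).2) :=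
    fun n => span_mono (range_subset_iff.2 fun i => mem_range_self _)
  refine ⟨fun k => (F k).1, fun k => (F k).2, fun m n => ?_,
    fun k => hx _ ((hF (2 * k + 1)).2.1 k (by omega)),
    fun k => hf _ ((hF (2 * k + 2)).2.2 k (by omega))⟩
  simpa using (hF (max m n + 1)).1 ⟨m, by omega⟩ ⟨n, by omega⟩

variable (𝕜 X) in
theorem exists_separating_dual_seq [TopologicalSpace.SeparableSpace X] :
    ∃ g : ℕ → StrongDual 𝕜 X, ∀ z, (∀ k, g k z = 0) → z = 0 := by
  set y := denseSeq X
  choose g hg1 hgy using fun k => exists_dual_vector'' 𝕜 (y k)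
  refine ⟨g, fun z hz => norm_le_zero_iff.1 ?_⟩
  have key : ∀ k, ‖y k‖ ≤ ‖y k - z‖ := fun k => calc
    ‖y k‖ = ‖g k (y k - z)‖ := by simp [hz, hgy]
    _ ≤ ‖g k‖ * ‖y k - z‖ := (g k).le_opNorm _
    _ ≤ ‖y k - z‖ := mul_le_of_le_one_left (norm_nonneg _) (hg1 k)
  simpa using (denseRange_denseSeq X).induction_on
    (p := fun w => ‖w‖ ≤ ‖w - z‖) z (isClosed_le (by fun_prop) (by fun_prop)) key

end Biorthogonal

theorem stmt8_general (X : Type*) [NormedAddCommGroup X] [NormedSpace ℝ X]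
    [TopologicalSpace.SeparableSpace X] (hX : ¬FiniteDimensional ℝ X) :
    ∃ (x : ℕ → X) (f : ℕ → StrongDual ℝ X),
      (∀ m n, f m (x n) = if m = n then 1 else 0) ∧
      Dense ((Submodule.span ℝ (Set.range x) : Submodule ℝ X) : Set X) ∧
      (∀ z : X, (∀ n, f n z = 0) → z = 0) := by
  obtain ⟨g, hg⟩ := exists_separating_dual_seq ℝ X
  obtain ⟨x, f, hxf, hy, hgf⟩ := exists_isBiorthogonal_forall_mem_span hX (denseSeq X) g
  refine ⟨x, f, hxf, (denseRange_denseSeq X).mono (range_subset_iff.2 hy),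
    fun z hz => hg z fun k => ?_⟩
  have hker : span ℝ (range f) ≤ LinearMap.ker (ContinuousLinearMap.apply ℝ ℝ z).toLinearMap :=
    span_le.2 (range_subset_iff.2 hz)
  exact hker (hgf k)

/-- Every separable infinite-dimensional Banach space admits a Markushevich basis: a
biorthogonal system `(xₙ, x*ₙ)` with `⟨x*ₘ, xₙ⟩ = δₘₙ`, dense linear span of the `xₙ`,
and total functionals (`∩ₙ ker x*ₙ = {0}`). -/
theorem stmt8 (X : Type*) [NormedAddCommGroup X] [NormedSpace ℝ X] [CompleteSpace X]
    [TopologicalSpace.SeparableSpace X] (hX : ¬FiniteDimensional ℝ X) :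
    ∃ (x : ℕ → X) (f : ℕ → StrongDual ℝ X),
      (∀ m n, f m (x n) = if m = n then 1 else 0) ∧
      Dense ((Submodule.span ℝ (Set.range x) : Submodule ℝ X) : Set X) ∧
      (∀ z : X, (∀ n, f n z = 0) → z = 0) :=
  stmt8_general X hX
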